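/- Let k be an even integer and let s, w ∈ ℂ satisfy 2 < Re(s) < k−2, Re(w) < Re(s)−1 and Re(w) < k−1−Re(s). Then the function z ↦ 𝓔_{s,k−s}(z,w) is a cusp form of weight k for SL₂(ℤ): it is holomorphic on ℍ, satisfies 𝓔_{s,k−s}(γz, w) = j(γ,z)^k · 𝓔_{s,k−s}(z,w) for every γ ∈ Γ and z ∈ ℍ, and 𝓔_{s,k−s}(z,w) → 0 as Im(z) → ∞, uniformly in Re(z). -/

import Mathlib

open Complex Matrix MatrixGroups

noncomputable section

/-- `Γ = SL₂(ℤ)`. -/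
abbrev SL2Z := Matrix.SpecialLinearGroup (Fin 2) ℤ

/-- `j(γ, z) = c z + d`. -/
def jc (g : SL2Z) (z : ℂ) : ℂ := (g.1 1 0 : ℂ) * z + (g.1 1 1 : ℂ)

/-- `c_γ`, the lower-left entry of `γ`. -/
def cEnt (g : SL2Z) : ℤ := g.1 1 0

/-- The Möbius action of `SL₂(ℤ)` on the upper half-plane, written on `ℂ`. -/
def moeb (g : SL2Z) (z : ℂ) : ℂ := ((g.1 0 0 : ℂ) * z + (g.1 0 1 : ℂ)) / jc g z

/-- The subgroup `B = {(1 n; 0 1) : n ∈ ℤ}`, i.e. the powers of `T = (1 1; 0 1)`. -/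
def Bsub : Subgroup SL2Z := Subgroup.zpowers ModularGroup.T

/-- The set of left cosets `Bγ`, i.e. `B∖Γ`. -/
abbrev BCoset := Quotient (QuotientGroup.rightRel Bsub)

/-- The summand of the double Eisenstein series `𝓔_{s,k-s}(z,w)`, evaluated on a pair of
cosets `(Bγ, Bδ)` via chosen representatives (it is well defined on such cosets), and
set to `0` unless `c_{γδ⁻¹} > 0`. All complex powers are principal-branch powers. -/
def dblSummand (k : ℤ) (s w : ℂ) (z : ℂ) (p : BCoset × BCoset) : ℂ :=
  if 0 < cEnt (p.1.out * p.2.out⁻¹) then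
    ((cEnt (p.1.out * p.2.out⁻¹) : ℂ)) ^ (w - 1) *
      (jc p.1.out z / jc p.2.out z) ^ (-s) * (jc p.2.out z) ^ (-(k : ℂ))
  else 0

/-- The double Eisenstein series `𝓔_{s,k-s}(z,w)`. -/
def dblE (k : ℤ) (s w : ℂ) (z : ℂ) : ℂ := ∑' p : BCoset × BCoset, dblSummand k s w z p

/-! A coset `Bγ` is determined by the bottom row `(c, d)` of `γ`, and `c_{γδ⁻¹}` is the
determinant of the bottom rows of `γ` and `δ`, so `𝓔_{s,k-s}` is a sum over pairs of rows.
Right multiplication by `g` permutes `B∖Γ` and turns the summand at `gz` into `j(g,z)^k` times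
the summand at `z`; this gives modularity without any convergence argument.

For the analytic properties, `Im (j(γ,z) · conj j(δ,z)) = c_{γδ⁻¹} Im z` gives
`c_{γδ⁻¹} ≤ |j(γ,z)| |j(δ,z)| / Im z`. Raising this to an exponent `t ≥ Re w - 1` with
`t < Re s - 2` and `t < k - Re s - 2` (possible exactly under the hypotheses on `s, w`) bounds the
summand by a constant times `(Im z)^(-t) |j(γ,z)|^(t - Re s) |j(δ,z)|^(t - k + Re s)`, a product
of two convergent Eisenstein-type series. On vertical strips this majorant is uniform, which gives
holomorphy; translating `z` into `|Re z| ≤ 1/2` it gives `𝓔_{s,k-s}(z,w) = O((Im z)^(-t))`. -/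

namespace DoubleEisenstein

open Real UpperHalfPlane ComplexConjugate Filter Topology

lemma mem_Bsub_iff (g : SL2Z) : g ∈ Bsub ↔ g.1 1 = ![0, 1] := by
  constructor
  · rintro ⟨n, rfl⟩
    ext j
    fin_cases j <;> simp [ModularGroup.coe_T_zpow]
  · intro h
    have h10 : g.1 1 0 = 0 := by simp [h]
    have h11 : g.1 1 1 = 1 := by simp [h]
    have h00 : g.1 0 0 = 1 := by
      have := g.det_coe
      rw [det_fin_two, h10, h11] at this
      simpa using this
    refine ⟨g.1 0 1, ?_⟩
    ext i j
    fin_cases i <;> fin_cases j <;> simp [ModularGroup.coe_T_zpow, h00, h10, h11]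

lemma one_row_one_eq : (1 : SL2Z).1 1 = ![0, 1] := by
  ext j
  fin_cases j <;> simp

lemma row_one_mul (a b : SL2Z) : (a * b).1 1 = a.1 1 ᵥ* b.1 := rfl

lemma rightRel_Bsub_iff (x y : SL2Z) : QuotientGroup.rightRel Bsub x y ↔ x.1 1 = y.1 1 := by
  rw [QuotientGroup.rightRel_apply, mem_Bsub_iff, ← one_row_one_eq]
  constructor
  · intro h
    calc x.1 1 = ((1 : SL2Z) * x).1 1 := by rw [one_mul]
      _ = (y * x⁻¹ * x).1 1 := by
        rw [row_one_mul, row_one_mul, h]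
      _ = y.1 1 := by rw [inv_mul_cancel_right]
  · intro h
    calc (y * x⁻¹).1 1 = (x * x⁻¹).1 1 := by
          rw [row_one_mul, row_one_mul, h]
      _ = (1 : SL2Z).1 1 := by rw [mul_inv_cancel]

def bRow (p : BCoset) : Fin 2 → ℤ := p.out.1 1

lemma bRow_mk (γ : SL2Z) : bRow ⟦γ⟧ = γ.1 1 :=
  (rightRel_Bsub_iff _ _).mp (Quotient.exact (Quotient.out_eq _))

lemma bRow_injective : Function.Injective bRow := by
  intro p q h
  rw [← Quotient.out_eq p, ← Quotient.out_eq q]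
  exact Quotient.sound ((rightRel_Bsub_iff _ _).mpr h)

lemma row_one_ne_zero (g : SL2Z) : g.1 1 ≠ 0 := by
  intro h
  have := g.det_coe
  rw [det_fin_two, show g.1 1 0 = 0 by simp [h], show g.1 1 1 = 0 by simp [h]] at this
  simp at this

lemma bRow_ne_zero (p : BCoset) : bRow p ≠ 0 := row_one_ne_zero _

def cosetMulRight (g : SL2Z) : BCoset ≃ BCoset :=
  Quotient.congr (Equiv.mulRight g) fun x y => by
    simp only [QuotientGroup.rightRel_apply, Equiv.coe_mulRight, _root_.mul_inv_rev,
      mul_assoc, mul_inv_cancel_left]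

lemma bRow_cosetMulRight (g : SL2Z) (p : BCoset) :
    bRow (cosetMulRight g p) = bRow p ᵥ* g.1 := by
  conv_lhs => rw [← Quotient.out_eq p]
  exact bRow_mk _

def jRow (v : Fin 2 → ℤ) (z : ℂ) : ℂ := v 0 * z + v 1

def rowDet (v u : Fin 2 → ℤ) : ℤ := (Matrix.of ![v, u]).det

lemma cEnt_mul_inv (γ δ : SL2Z) : cEnt (γ * δ⁻¹) = rowDet (γ.1 1) (δ.1 1) := by
  rw [cEnt, row_one_mul, SpecialLinearGroup.SL2_inv_expl, rowDet, det_fin_two]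
  simp [vecMul, dotProduct, Fin.sum_univ_two]
  ring

lemma rowDet_vecMul (v u : Fin 2 → ℤ) (g : SL2Z) : rowDet (v ᵥ* g.1) (u ᵥ* g.1) = rowDet v u := by
  have h : Matrix.of ![v ᵥ* g.1, u ᵥ* g.1] = Matrix.of ![v, u] * g.1 := by
    ext i j
    fin_cases i <;> rfl
  rw [rowDet, h, det_mul, g.det_coe, mul_one, rowDet]

lemma im_jRow_mul_conj (v u : Fin 2 → ℤ) (z : ℂ) :
    (jRow v z * conj (jRow u z)).im = rowDet v u * z.im := by
  simp [jRow, rowDet, det_fin_two]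
  ring

lemma jRow_ne_zero {v : Fin 2 → ℤ} (hv : v ≠ 0) {z : ℂ} (hz : 0 < z.im) : jRow v z ≠ 0 :=
  norm_pos_iff.mp <| (mul_pos (EisensteinSeries.r_pos ⟨z, hz⟩) (norm_pos_iff.mpr hv)).trans_le
    (EisensteinSeries.r_mul_max_le ⟨z, hz⟩ hv)

lemma jc_ne_zero (g : SL2Z) {z : ℂ} (hz : 0 < z.im) : jc g z ≠ 0 :=
  jRow_ne_zero (row_one_ne_zero g) hz

lemma jRow_moeb (v : Fin 2 → ℤ) (g : SL2Z) {z : ℂ} (hz : 0 < z.im) :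
    jRow v (moeb g z) = jRow (v ᵥ* g.1) z / jc g z := by
  have hj := jc_ne_zero g hz
  rw [moeb, eq_div_iff hj, jRow, jRow, add_mul, mul_assoc, div_mul_cancel₀ _ hj]
  simp only [jc, vecMul, dotProduct, Fin.sum_univ_two]
  push_cast
  ring

def rowSummand (k : ℤ) (s w z : ℂ) (v u : Fin 2 → ℤ) : ℂ :=
  if 0 < rowDet v u then
    (rowDet v u : ℂ) ^ (w - 1) * (jRow v z / jRow u z) ^ (-s) * jRow u z ^ (-(k : ℂ))
  else 0

lemma dblSummand_eq_rowSummand (k : ℤ) (s w z : ℂ) (p : BCoset × BCoset) :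
    dblSummand k s w z p = rowSummand k s w z (bRow p.1) (bRow p.2) := by
  rw [dblSummand, cEnt_mul_inv]
  rfl

lemma cpow_neg_intCast (x : ℂ) (k : ℤ) : x ^ (-(k : ℂ)) = x ^ (-k) := by
  rw [← cpow_intCast, Int.cast_neg]

lemma rowSummand_moeb (k : ℤ) (s w : ℂ) (g : SL2Z) {z : ℂ} (hz : 0 < z.im)
    (v : Fin 2 → ℤ) {u : Fin 2 → ℤ} (hu : u ᵥ* g.1 ≠ 0) :
    rowSummand k s w (moeb g z) v u = jc g z ^ k * rowSummand k s w z (v ᵥ* g.1) (u ᵥ* g.1) := by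
  rw [rowSummand, rowSummand, rowDet_vecMul]
  split_ifs
  · have hj := jc_ne_zero g hz
    have hu' := jRow_ne_zero hu hz
    rw [jRow_moeb v g hz, jRow_moeb u g hz, div_div_div_cancel_right₀ hj, cpow_neg_intCast,
      cpow_neg_intCast, div_zpow, zpow_neg (jc g z), div_inv_eq_mul]
    ring
  · rw [mul_zero]

lemma dblE_moeb (k : ℤ) (s w : ℂ) (g : SL2Z) {z : ℂ} (hz : 0 < z.im) :
    dblE k s w (moeb g z) = jc g z ^ k * dblE k s w z := by
  let e := (cosetMulRight g).prodCongr (cosetMulRight g)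
  calc dblE k s w (moeb g z) = ∑' p, jc g z ^ k * dblSummand k s w z (e p) := by
        refine tsum_congr fun p => ?_
        rw [dblSummand_eq_rowSummand, dblSummand_eq_rowSummand, Equiv.prodCongr_apply,
          Prod.map_fst, Prod.map_snd, bRow_cosetMulRight, bRow_cosetMulRight]
        refine rowSummand_moeb k s w g hz _ ?_
        rw [← bRow_cosetMulRight]
        exact bRow_ne_zero _
    _ = jc g z ^ k * dblE k s w z := by rw [tsum_mul_left, e.tsum_eq]; rfl

lemma dblE_add_intCast (k : ℤ) (s w : ℂ) {z : ℂ} (hz : 0 < z.im) (n : ℤ) :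
    dblE k s w (z + n) = dblE k s w z := by
  have hjc : jc (ModularGroup.T ^ n) z = 1 := by simp [jc, ModularGroup.coe_T_zpow]
  have hmoeb : moeb (ModularGroup.T ^ n) z = z + n := by
    simp [moeb, hjc, ModularGroup.coe_T_zpow]
  simpa [hmoeb, hjc] using dblE_moeb k s w (ModularGroup.T ^ n) hz

lemma norm_cpow_le_rpow_mul_exp (x s : ℂ) : ‖x ^ s‖ ≤ ‖x‖ ^ s.re * Real.exp (π * |s.im|) := by
  refine (norm_cpow_le x s).trans ?_
  rw [div_eq_mul_inv, ← Real.exp_neg]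
  refine mul_le_mul_of_nonneg_left (Real.exp_le_exp.mpr ?_) (by positivity)
  calc -(arg x * s.im) ≤ |arg x| * |s.im| := by rw [← abs_mul]; exact neg_le_abs _
    _ ≤ π * |s.im| := by gcongr; exact abs_arg_le_pi x

lemma rowDet_mul_im_le (v u : Fin 2 → ℤ) (z : ℂ) :
    rowDet v u * z.im ≤ ‖jRow v z‖ * ‖jRow u z‖ := by
  rw [← im_jRow_mul_conj, ← norm_conj (jRow u z), ← norm_mul]
  exact im_le_norm _

lemma norm_rowSummand_le (k : ℤ) (s w : ℂ) {t : ℝ} (ht : 0 ≤ t) (htw : w.re - 1 ≤ t)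
    {v u : Fin 2 → ℤ} (hv : v ≠ 0) (hu : u ≠ 0) {z : ℂ} (hz : 0 < z.im) :
    ‖rowSummand k s w z v u‖ ≤ Real.exp (π * |s.im|) * z.im ^ (-t) *
      ‖jRow v z‖ ^ (t - s.re) * ‖jRow u z‖ ^ (t - (k - s.re)) := by
  set a := ‖jRow v z‖
  set b := ‖jRow u z‖
  have ha : 0 < a := norm_pos_iff.mpr (jRow_ne_zero hv hz)
  have hb : 0 < b := norm_pos_iff.mpr (jRow_ne_zero hu hz)
  rw [rowSummand]
  split_ifs with hC
  swap
  · rw [norm_zero]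
    positivity
  have hC1 : (1 : ℝ) ≤ rowDet v u := by exact_mod_cast hC
  have hdet : ‖(rowDet v u : ℂ) ^ (w - 1)‖ ≤ (a * b / z.im) ^ t := by
    rw [← ofReal_intCast, norm_cpow_eq_rpow_re_of_pos (by linarith)]
    calc _ ≤ (rowDet v u : ℝ) ^ t := Real.rpow_le_rpow_of_exponent_le hC1 (by simpa using htw)
      _ ≤ _ := Real.rpow_le_rpow (by linarith)
          ((le_div_iff₀ hz).mpr (rowDet_mul_im_le v u z)) ht
  have hquot : ‖(jRow v z / jRow u z) ^ (-s)‖ ≤ (a / b) ^ (-s.re) * Real.exp (π * |s.im|) := by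
    simpa [norm_div] using norm_cpow_le_rpow_mul_exp (jRow v z / jRow u z) (-s)
  have hpow : ‖jRow u z ^ (-(k : ℂ))‖ = b ^ (-(k : ℝ)) := by
    rw [cpow_neg_intCast, norm_zpow, Real.rpow_neg hb.le, Real.rpow_intCast, _root_.zpow_neg]
  rw [norm_mul, norm_mul, hpow]
  calc _ ≤ (a * b / z.im) ^ t * ((a / b) ^ (-s.re) * Real.exp (π * |s.im|)) * b ^ (-(k : ℝ)) := by
        gcongr
    _ = _ := by
        simp only [Real.div_rpow (mul_pos ha hb).le hz.le, Real.mul_rpow ha.le hb.le,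
          Real.div_rpow ha.le hb.le, Real.rpow_sub ha, Real.rpow_sub hb, Real.rpow_neg ha.le,
          Real.rpow_neg hb.le, Real.rpow_neg hz.le]
        field_simp

lemma differentiableAt_rowSummand (k : ℤ) (s w : ℂ) (v : Fin 2 → ℤ) {u : Fin 2 → ℤ}
    (hu : u ≠ 0) {z : ℂ} (hz : 0 < z.im) :
    DifferentiableAt ℂ (fun z => rowSummand k s w z v u) z := by
  unfold rowSummand
  split_ifs with hC
  · have hju := jRow_ne_zero hu hz
    have hjRow (x : Fin 2 → ℤ) : Differentiable ℂ (jRow x) := by unfold jRow; fun_prop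
    -- the ratio lies in `ℍ`, away from the branch cut of the principal power
    have hslit : jRow v z / jRow u z ∈ slitPlane := by
      refine Or.inr (ne_of_gt ?_)
      have him : (jRow v z / jRow u z).im = rowDet v u * z.im / normSq (jRow u z) := by
        rw [← im_jRow_mul_conj, div_im, mul_im, conj_re, conj_im]
        ring
      rw [him]
      have : (0 : ℝ) < rowDet v u := by exact_mod_cast hC
      have := normSq_pos.mpr hju
      positivity
    simp_rw [cpow_neg_intCast]
    exact ((differentiableAt_const _).mul (((hjRow v z).div (hjRow u z) hju).cpow
      (differentiableAt_const _) hslit)).mul ((hjRow u z).zpow (Or.inl hju))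
  · exact differentiableAt_const 0

lemma summable_norm_bRow_rpow {a : ℝ} (ha : a < -2) :
    Summable fun p : BCoset => ‖bRow p‖ ^ a := by
  have := (EisensteinSeries.summable_one_div_norm_rpow (k := -a) (by linarith)).comp_injective
    bRow_injective
  simpa only [neg_neg, Function.comp_def] using this

def pairWeight (k : ℤ) (s : ℂ) (t : ℝ) (p : BCoset × BCoset) : ℝ :=
  ‖bRow p.1‖ ^ (t - s.re) * ‖bRow p.2‖ ^ (t - (k - s.re))

lemma pairWeight_nonneg (k : ℤ) (s : ℂ) (t : ℝ) (p : BCoset × BCoset) :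
    0 ≤ pairWeight k s t p := by
  rw [pairWeight]
  positivity

structure AdmissibleExponent (k : ℤ) (s w : ℂ) (t : ℝ) : Prop where
  pos : 0 < t
  re_sub_one_le : w.re - 1 ≤ t
  sub_re_lt : t - s.re < -2
  sub_sub_re_lt : t - (k - s.re) < -2

lemma exists_admissibleExponent {k : ℤ} {s w : ℂ} (hs1 : 2 < s.re) (hs2 : s.re < (k : ℝ) - 2)
    (hw1 : w.re < s.re - 1) (hw2 : w.re < (k : ℝ) - 1 - s.re) :
    ∃ t, AdmissibleExponent k s w t := by
  refine ⟨max (w.re - 1) ((min s.re (k - s.re) - 2) / 2), ?_, le_max_left _ _, ?_, ?_⟩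
  · exact lt_max_of_lt_right (by have := lt_min hs1 (by linarith : 2 < (k : ℝ) - s.re); linarith)
  · have := min_le_left s.re (k - s.re)
    exact sub_lt_iff_lt_add.mpr (max_lt (by linarith) (by linarith))
  · have := min_le_right s.re (k - s.re)
    exact sub_lt_iff_lt_add.mpr (max_lt (by linarith) (by linarith))

section AdmissibleExponent

variable {k : ℤ} {s w : ℂ} {t : ℝ}

lemma AdmissibleExponent.summable_pairWeight (ht : AdmissibleExponent k s w t) :
    Summable (pairWeight k s t) :=
  (summable_norm_bRow_rpow ht.sub_re_lt).mul_of_nonneg (summable_norm_bRow_rpow ht.sub_sub_re_lt)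
    (fun _ => by positivity) (fun _ => by positivity)

lemma AdmissibleExponent.exists_norm_dblSummand_le (ht : AdmissibleExponent k s w t) (A : ℝ)
    {B : ℝ} (hB : 0 < B) : ∃ C, 0 ≤ C ∧ ∀ z ∈ verticalStrip A B, ∀ p : BCoset × BCoset,
      ‖dblSummand k s w z p‖ ≤ C * z.im ^ (-t) * pairWeight k s t p := by
  set r := EisensteinSeries.r ⟨⟨A, B⟩, hB⟩
  have hr : 0 < r := EisensteinSeries.r_pos _
  refine ⟨Real.exp (π * |s.im|) * r ^ (t - s.re) * r ^ (t - (k - s.re)), by positivity,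
    fun z hz p => ?_⟩
  have hrow (a : ℝ) (ha : a < -2) (v : Fin 2 → ℤ) : ‖jRow v z‖ ^ a ≤ r ^ a * ‖v‖ ^ a := by
    have := EisensteinSeries.summand_bound_of_mem_verticalStrip (k := -a) (by linarith) v hB hz
    rw [neg_neg] at this
    exact this
  rw [dblSummand_eq_rowSummand]
  refine (norm_rowSummand_le k s w ht.pos.le ht.re_sub_one_le (bRow_ne_zero _) (bRow_ne_zero _)
    z.im_pos).trans ?_
  rw [coe_im]
  have h1 := hrow _ ht.sub_re_lt (bRow p.1)
  have h2 := hrow _ ht.sub_sub_re_lt (bRow p.2)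
  calc _ ≤ Real.exp (π * |s.im|) * z.im ^ (-t) * (r ^ (t - s.re) * ‖bRow p.1‖ ^ (t - s.re)) *
        (r ^ (t - (k - s.re)) * ‖bRow p.2‖ ^ (t - (k - s.re))) := by
        gcongr
    _ = _ := by rw [pairWeight]; ring

lemma AdmissibleExponent.differentiableOn_dblE (ht : AdmissibleExponent k s w t) :
    DifferentiableOn ℂ (dblE k s w) {z : ℂ | 0 < z.im} := by
  intro z₀ (hz₀ : 0 < z₀.im)
  have hB : 0 < z₀.im / 2 := half_pos hz₀
  obtain ⟨C, hC0, hC⟩ := ht.exists_norm_dblSummand_le (|z₀.re| + 1) hB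
  let U : Set ℂ := {z | |z.re| < |z₀.re| + 1} ∩ {z | z₀.im / 2 < z.im}
  have hU : IsOpen U := (isOpen_lt (by fun_prop) (by fun_prop)).inter
    (isOpen_lt (by fun_prop) (by fun_prop))
  have hz₀U : z₀ ∈ U :=
    ⟨show |z₀.re| < |z₀.re| + 1 by linarith, show z₀.im / 2 < z₀.im by linarith⟩
  have hUpos {z : ℂ} (hz : z ∈ U) : 0 < z.im := hB.trans hz.2
  refine (DifferentiableOn.differentiableAt ?_ (hU.mem_nhds hz₀U)).differentiableWithinAt
  refine differentiableOn_tsum_of_summable_norm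
    (ht.summable_pairWeight.mul_left (C * (z₀.im / 2) ^ (-t))) (fun p z hz => ?_) hU
    fun p z hz => ?_
  · simp_rw [dblSummand_eq_rowSummand]
    exact (differentiableAt_rowSummand k s w _ (bRow_ne_zero _) (hUpos hz)).differentiableWithinAt
  · refine (hC ⟨z, hUpos hz⟩ ⟨hz.1.le, hz.2.le⟩ p).trans ?_
    have him : z.im ^ (-t) ≤ (z₀.im / 2) ^ (-t) :=
      Real.rpow_le_rpow_of_nonpos hB hz.2.le (neg_nonpos.mpr ht.pos.le)
    exact mul_le_mul_of_nonneg_right (mul_le_mul_of_nonneg_left him hC0) (pairWeight_nonneg ..)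

lemma AdmissibleExponent.exists_norm_dblE_le (ht : AdmissibleExponent k s w t) :
    ∃ C, ∀ z : ℂ, 1 ≤ z.im → ‖dblE k s w z‖ ≤ C * z.im ^ (-t) := by
  obtain ⟨C, -, hC⟩ := ht.exists_norm_dblSummand_le (1 / 2) one_pos
  refine ⟨C * ∑' p, pairWeight k s t p, fun z hz => ?_⟩
  have hz0 : 0 < z.im := one_pos.trans_le hz
  let z' : ℍ := ⟨z - round z.re, by simpa using hz0⟩
  have hz' : z' ∈ verticalStrip (1 / 2) 1 := by
    refine ⟨?_, ?_⟩
    · change |(z - round z.re).re| ≤ 1 / 2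
      simpa using abs_sub_round z.re
    · change 1 ≤ (z - round z.re).im
      simpa using hz
  have hE : dblE k s w z = dblE k s w z' := by
    simpa [z'] using dblE_add_intCast k s w z'.im_pos (round z.re)
  rw [hE, show z.im = z'.im by simp [z'], mul_right_comm]
  exact tsum_of_norm_bounded (ht.summable_pairWeight.hasSum.mul_left _) fun p =>
    (hC z' hz' p).trans_eq (by ring)

lemma AdmissibleExponent.exists_norm_dblE_lt (ht : AdmissibleExponent k s w t) {ε : ℝ}
    (hε : 0 < ε) : ∃ Y : ℝ, ∀ z : ℂ, Y ≤ z.im → ‖dblE k s w z‖ < ε := by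
  obtain ⟨C, hC⟩ := ht.exists_norm_dblE_le
  have hlim : Tendsto (fun y : ℝ => C * y ^ (-t)) atTop (𝓝 0) := by
    simpa using (tendsto_rpow_neg_atTop ht.pos).const_mul C
  obtain ⟨Y, hY⟩ := eventually_atTop.mp ((hlim.eventually_lt_const hε).and (eventually_ge_atTop 1))
  exact ⟨Y, fun z hz => (hC z (hY _ hz).2).trans_lt (hY _ hz).1⟩

end AdmissibleExponent

end DoubleEisenstein

open DoubleEisenstein

theorem dblEisenstein_cuspform_general (k : ℤ) (s w : ℂ)
    (hs1 : 2 < s.re) (hs2 : s.re < (k : ℝ) - 2)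
    (hw1 : w.re < s.re - 1) (hw2 : w.re < (k : ℝ) - 1 - s.re) :
    DifferentiableOn ℂ (dblE k s w) {z : ℂ | 0 < z.im} ∧
    (∀ g : SL2Z, ∀ z : ℂ, 0 < z.im → dblE k s w (moeb g z) = jc g z ^ k * dblE k s w z) ∧
    (∀ ε : ℝ, 0 < ε → ∃ Y : ℝ, ∀ z : ℂ, Y ≤ z.im → ‖dblE k s w z‖ < ε) := by
  obtain ⟨t, ht⟩ := exists_admissibleExponent hs1 hs2 hw1 hw2
  exact ⟨ht.differentiableOn_dblE, fun g _ hz => dblE_moeb k s w g hz,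
    fun _ hε => ht.exists_norm_dblE_lt hε⟩

/-- for `2 < Re s < k - 2`, `Re w < Re s - 1`, `Re w < k - 1 - Re s`, the function
`z ↦ 𝓔_{s,k-s}(z,w)` is a weight `k` cusp form for `SL₂(ℤ)`: it is holomorphic on `ℍ`,
transforms with automorphy factor `j(γ,z)^k`, and tends to `0` as `Im z → ∞`,
uniformly in `Re z`. -/
theorem dblEisenstein_cuspform (k : ℤ) (hk : Even k) (s w : ℂ)
    (hs1 : 2 < s.re) (hs2 : s.re < (k : ℝ) - 2)
    (hw1 : w.re < s.re - 1) (hw2 : w.re < (k : ℝ) - 1 - s.re) :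
    DifferentiableOn ℂ (dblE k s w) {z : ℂ | 0 < z.im} ∧
    (∀ g : SL2Z, ∀ z : ℂ, 0 < z.im → dblE k s w (moeb g z) = jc g z ^ k * dblE k s w z) ∧
    (∀ ε : ℝ, 0 < ε → ∃ Y : ℝ, ∀ z : ℂ, Y ≤ z.im → ‖dblE k s w z‖ < ε) :=
  dblEisenstein_cuspform_general k s w hs1 hs2 hw1 hw2

end
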